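/- Let $d \geq 2$ be an integer and let $F$ be a field whose characteristic does not divide $d$ (in particular characteristic $0$ is allowed). Let $c \in F$, set $f := x^d - c$, and suppose there is a positive integer $n_0$ such that $f^{n_0}(0) = 0$. Let $\alpha \in F$ with $\alpha \neq -c$. Then for each positive integer $N$, the splitting field $F_N(f,\alpha)$ of $f^N - \alpha$ over $F$ contains an element of multiplicative order equal to $d^{\max(\lfloor N/n_0 \rfloor - 1, 0) + 1}$. -/

import Mathlib

/-!
Let `f = X ^ d - c` and work in an algebraic closure `Ω` of the splitting field. For `l ≥ 1` let
`H_l` be the monoid generated by the ratios `β / β'` of points of the fibre `f^[l]⁻¹ {α}`. It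
contains the `d`-th roots of unity, as `η = (η γ) / γ` for a nonzero point `γ` of the fibre, which
exists because `f⁻¹ {α}` has `d ≥ 2` points when `α ≠ -c`. Since `f^[n₀] 0 = 0`, a suitable
product of `d ^ (n₀ - 1)` points of `f^[n₀]⁻¹ {γ}` has `d`-th power `± γ`, with a sign independent
of `γ`; so every element of `H_l` has a `d`-th root in `H_(l + n₀)`. By induction every
`d ^ (i + 1)`-th root of unity lies in `H_(j + i n₀)` for `j ≥ 1`, and `H_N` lies in the
splitting field of `f^[N] - α`.
-/

open Polynomial

/-- The `N`-th iterate of a polynomial under composition, with `f^0 = X`. -/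
noncomputable def polyIter {K : Type*} [CommRing K] (f : Polynomial K) : ℕ → Polynomial K
  | 0 => Polynomial.X
  | n + 1 => (polyIter f n).comp f

open Pointwise

namespace Polynomial

variable {R S : Type*} [CommRing R] [CommRing S]

theorem polyIter_map (φ : R →+* S) (p : R[X]) (n : ℕ) :
    (polyIter p n).map φ = polyIter (p.map φ) n := by
  induction n with
  | zero => simp [polyIter]
  | succ n ih => simp [polyIter, map_comp, ih]

theorem eval_polyIter (p : R[X]) (n : ℕ) (x : R) :
    (polyIter p n).eval x = (fun y => p.eval y)^[n] x := by
  induction n generalizing x with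
  | zero => simp [polyIter]
  | succ n ih => simp [polyIter, eval_comp, ih]

theorem natDegree_polyIter [IsDomain R] (p : R[X]) (n : ℕ) :
    (polyIter p n).natDegree = p.natDegree ^ n := by
  induction n with
  | zero => simp [polyIter]
  | succ n ih => rw [polyIter, natDegree_comp, ih, pow_succ]

theorem monic_polyIter {p : R[X]} (hp : p.Monic) (hp0 : p.natDegree ≠ 0) (n : ℕ) :
    (polyIter p n).Monic := by
  induction n with
  | zero => exact monic_X
  | succ n ih => exact ih.comp hp hp0

theorem Monic.sub_C {p : R[X]} (hp : p.Monic) (hp0 : p.natDegree ≠ 0) (a : R) :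
    (p - C a).Monic :=
  hp.sub_of_left <| degree_C_le.trans_lt <|
    natDegree_pos_iff_degree_pos.mp <| Nat.pos_of_ne_zero hp0

end Polynomial

theorem Nat.exists_ne_zero_add_div_sub_one_mul_eq {N k : ℕ} (hN : N ≠ 0) (hk : k ≠ 0) :
    ∃ j ≠ 0, j + (N / k - 1) * k = N := by
  have := Nat.div_mul_le_self N k
  have : (N / k - 1) * k = N / k * k - k := Nat.sub_one_mul _ _
  exact ⟨N - (N / k - 1) * k, by omega, by omega⟩

theorem List.prod_div_prod_mem_closure_div {M : Type*} [DivisionCommMonoid M] {s : Set M} :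
    ∀ {l l' : List M}, l.length = l'.length → (∀ x ∈ l, x ∈ s) → (∀ x ∈ l', x ∈ s) →
      l.prod / l'.prod ∈ Submonoid.closure (s / s)
  | [], [], _, _, _ => by simp
  | x :: l, x' :: l', hlen, hl, hl' => by
    rw [List.prod_cons, List.prod_cons, mul_div_mul_comm]
    exact Submonoid.mul_mem _
      (Submonoid.subset_closure (Set.div_mem_div (hl x List.mem_cons_self)
        (hl' x' List.mem_cons_self)))
      (List.prod_div_prod_mem_closure_div (by simpa using hlen)
        (fun y hy => hl y (List.mem_cons_of_mem x hy))
        (fun y hy => hl' y (List.mem_cons_of_mem x' hy)))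

def fiberRatios {M : Type*} [DivisionMonoid M] (f : M → M) (a : M) : Submonoid M :=
  Submonoid.closure (f ⁻¹' {a} / f ⁻¹' {a})

theorem iterate_pow_sub_mul_of_pow_eq_one {R : Type*} [CommRing R] {d : ℕ} {c η : R}
    (hη : η ^ d = 1) {l : ℕ} (hl : l ≠ 0) (x : R) :
    (fun y : R => y ^ d - c)^[l] (η * x) = (fun y : R => y ^ d - c)^[l] x := by
  obtain ⟨k, rfl⟩ := Nat.exists_eq_succ_of_ne_zero hl
  simp [mul_pow, hη]

section PowSub

variable {Ω : Type*} [Field Ω] {d : ℕ} {c : Ω}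

theorem mem_fiberRatios_of_pow_eq_one {η : Ω} (hη : η ^ d = 1) {l : ℕ} (hl : l ≠ 0) {a γ : Ω}
    (hγ : (fun y : Ω => y ^ d - c)^[l] γ = a) (hγ0 : γ ≠ 0) :
    η ∈ fiberRatios (fun y : Ω => y ^ d - c)^[l] a := by
  refine Submonoid.subset_closure ⟨η * γ, ?_, γ, hγ, mul_div_cancel_right₀ η hγ0⟩
  simpa [Set.mem_preimage, iterate_pow_sub_mul_of_pow_eq_one hη hl] using hγ

variable [IsAlgClosed Ω]

theorem surjective_iterate_pow_sub (hd : d ≠ 0) (c : Ω) (l : ℕ) :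
    Function.Surjective (fun y : Ω => y ^ d - c)^[l] := by
  refine Function.Surjective.iterate (fun y => ?_) l
  obtain ⟨z, hz⟩ := IsAlgClosed.exists_pow_nat_eq (y + c) (Nat.pos_of_ne_zero hd)
  exact ⟨z, by simp [hz]⟩

theorem exists_ne_zero_iterate_pow_sub_eq (hd : 2 ≤ d) (hdΩ : (d : Ω) ≠ 0) {a : Ω}
    (ha : a ≠ -c) {l : ℕ} (hl : l ≠ 0) :
    ∃ γ ≠ 0, (fun y : Ω => y ^ d - c)^[l] γ = a := by
  obtain ⟨δ, hδ⟩ := IsAlgClosed.exists_pow_nat_eq (a + c) (n := d) (by omega)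
  have hδ0 : δ ≠ 0 := by
    rintro rfl
    exact ha (eq_neg_of_add_eq_zero_left (by simpa [zero_pow (by omega : d ≠ 0)] using hδ.symm))
  have : NeZero (d : Ω) := ⟨hdΩ⟩
  obtain ⟨ζ, hζ⟩ := HasEnoughRootsOfUnity.exists_primitiveRoot Ω d
  -- `δ` and `ζ * δ` are distinct preimages of `a`, so one of them avoids the image of `0`.
  obtain ⟨θ, hθ, hθ0⟩ : ∃ θ, θ ^ d - c = a ∧ (fun y : Ω => y ^ d - c)^[l - 1] 0 ≠ θ := by
    by_cases h : (fun y : Ω => y ^ d - c)^[l - 1] 0 = δ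
    · refine ⟨ζ * δ, by simp [mul_pow, hζ.pow_eq_one, hδ], fun h' => ?_⟩
      exact hζ.ne_one (by omega) (mul_left_eq_self₀.mp (h'.symm.trans h) |>.resolve_right hδ0)
    · exact ⟨δ, by simp [hδ], h⟩
  obtain ⟨γ, hγ⟩ := surjective_iterate_pow_sub (d := d) (by omega) c (l - 1) θ
  refine ⟨γ, by rintro rfl; exact hθ0 hγ, ?_⟩
  rw [← Nat.sub_add_cancel (Nat.one_le_iff_ne_zero.mpr hl), Function.iterate_succ_apply', hγ, hθ]

/-- The roots `δ` of `W(x) = f^[n] (x - c) - γ` are the `d`-th powers of the points of the fibre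
`(f^[n+1])⁻¹ {γ}`; choosing one `d`-th root of each gives `L`. The sign comes from
`W(0) = f^[n+1] 0 - γ = -γ`. -/
theorem exists_list_iterate_pow_sub_eq (hd : d ≠ 0) {n : ℕ}
    (hper : (fun y : Ω => y ^ d - c)^[n + 1] 0 = 0) (γ : Ω) :
    ∃ L : List Ω, L.length = d ^ n ∧ (∀ β ∈ L, (fun y : Ω => y ^ d - c)^[n + 1] β = γ) ∧
      L.prod ^ d = (-1) ^ (d ^ n + 1) * γ := by
  set V : Polynomial Ω := (polyIter (X ^ d - C c) n).comp (X - C c)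
  set W : Polynomial Ω := V - C γ
  have hpow : (X ^ d - C c : Polynomial Ω).natDegree = d := natDegree_X_pow_sub_C
  have hVdeg : V.natDegree = d ^ n := by
    rw [natDegree_comp, natDegree_polyIter, hpow, natDegree_X_sub_C, mul_one]
  have hWdeg : W.natDegree = d ^ n := by rw [natDegree_sub_C, hVdeg]
  have hWmonic : W.Monic :=
    ((monic_polyIter (monic_X_pow_sub_C c hd) (hpow.symm ▸ hd) n).comp_X_sub_C c).sub_C
      (by rw [hVdeg]; positivity) γ
  have hWeval (x : Ω) : W.eval x = (fun y : Ω => y ^ d - c)^[n] (x - c) - γ := by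
    simp [W, V, eval_polyIter]
  have hWsplits : W.Splits := IsAlgClosed.splits W
  have hprod : W.roots.prod = (-1) ^ (d ^ n + 1) * γ := by
    have h := hWsplits.coeff_zero_eq_prod_roots_of_monic hWmonic
    have h0 : (fun y : Ω => y ^ d - c)^[n] (-c) = 0 := by
      simpa [zero_pow hd] using hper
    rw [coeff_zero_eq_eval_zero, hWeval, zero_sub, h0, hWdeg] at h
    have hsq : ((-1 : Ω) ^ d ^ n) ^ 2 = 1 := by rw [← pow_mul, pow_mul', neg_one_sq, one_pow]
    linear_combination (-(-1 : Ω) ^ d ^ n) * h - W.roots.prod * hsq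
  choose r hr using fun δ : Ω => IsAlgClosed.exists_pow_nat_eq δ (Nat.pos_of_ne_zero hd)
  refine ⟨(W.roots.map r).toList, ?_, fun β hβ => ?_, ?_⟩
  · rw [Multiset.length_toList, Multiset.card_map, ← hWsplits.natDegree_eq_card_roots, hWdeg]
  · obtain ⟨δ, hδ, rfl⟩ := Multiset.mem_map.mp (Multiset.mem_toList.mp hβ)
    have hδW := (mem_roots hWmonic.ne_zero).mp hδ
    rw [IsRoot, hWeval, sub_eq_zero] at hδW
    rwa [Function.iterate_succ_apply, hr]
  · rw [Multiset.prod_toList, ← Multiset.prod_map_pow]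
    simp [hr, hprod]

theorem exists_pow_eq_of_mem_fiberRatios (hd : d ≠ 0) {n : ℕ}
    (hper : (fun y : Ω => y ^ d - c)^[n + 1] 0 = 0) {a : Ω} {l : ℕ} {s : Ω}
    (hs : s ∈ fiberRatios (fun y : Ω => y ^ d - c)^[l] a) :
    ∃ t ∈ fiberRatios (fun y : Ω => y ^ d - c)^[l + (n + 1)] a, t ^ d = s := by
  induction hs using Submonoid.closure_induction with
  | mem s hs =>
    obtain ⟨β, hβ, β', hβ', rfl⟩ := hs
    obtain ⟨L, hL, hLmem, hLprod⟩ := exists_list_iterate_pow_sub_eq hd hper β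
    obtain ⟨L', hL', hLmem', hLprod'⟩ := exists_list_iterate_pow_sub_eq hd hper β'
    have hlift {L : List Ω} {β : Ω} (hβ : (fun y : Ω => y ^ d - c)^[l] β = a)
        (hLmem : ∀ x ∈ L, (fun y : Ω => y ^ d - c)^[n + 1] x = β) :
        ∀ x ∈ L, x ∈ (fun y : Ω => y ^ d - c)^[l + (n + 1)] ⁻¹' {a} := fun x hx => by
      rw [Set.mem_preimage, Set.mem_singleton_iff, Function.iterate_add_apply, hLmem x hx, hβ]
    refine ⟨L.prod / L'.prod, List.prod_div_prod_mem_closure_div (hL.trans hL'.symm)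
      (hlift hβ hLmem) (hlift hβ' hLmem'), ?_⟩
    rw [div_pow, hLprod, hLprod',
      mul_div_mul_left _ _ (pow_ne_zero _ (neg_ne_zero.mpr one_ne_zero))]
  | one => exact ⟨1, Submonoid.one_mem _, one_pow d⟩
  | mul s s' _ _ ih ih' =>
    obtain ⟨t, ht, rfl⟩ := ih
    obtain ⟨t', ht', rfl⟩ := ih'
    exact ⟨t * t', Submonoid.mul_mem _ ht ht', mul_pow t t' d⟩

theorem pow_eq_one_mem_fiberRatios (hd : 2 ≤ d) (hdΩ : (d : Ω) ≠ 0) {a : Ω} (ha : a ≠ -c)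
    {n : ℕ} (hper : (fun y : Ω => y ^ d - c)^[n + 1] 0 = 0) {j : ℕ} (hj : j ≠ 0) (i : ℕ)
    {ζ : Ω} (hζ : ζ ^ d ^ (i + 1) = 1) :
    ζ ∈ fiberRatios (fun y : Ω => y ^ d - c)^[j + i * (n + 1)] a := by
  have hroots {η : Ω} (hη : η ^ d = 1) (l : ℕ) :
      η ∈ fiberRatios (fun y : Ω => y ^ d - c)^[j + l] a := by
    obtain ⟨γ, hγ0, hγ⟩ := exists_ne_zero_iterate_pow_sub_eq hd hdΩ ha (l := j + l) (by omega)
    exact mem_fiberRatios_of_pow_eq_one hη (by omega) hγ hγ0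
  induction i generalizing ζ with
  | zero => simpa using hroots (by simpa using hζ) 0
  | succ i ih =>
    have hζd : (ζ ^ d) ^ d ^ (i + 1) = 1 := by rw [← pow_mul, ← pow_succ']; exact hζ
    obtain ⟨t, ht, htd⟩ := exists_pow_eq_of_mem_fiberRatios (by omega) hper (ih hζd)
    have hζ0 : ζ ≠ 0 := by rintro rfl; simp [zero_pow (pow_ne_zero _ (by omega : d ≠ 0))] at hζ
    have ht0 : t ≠ 0 := by
      rintro rfl
      exact pow_ne_zero d hζ0 (htd.symm.trans (zero_pow (by omega)))
    have hη : (ζ / t) ^ d = 1 := by rw [div_pow, htd, div_self (pow_ne_zero _ hζ0)]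
    rw [← div_mul_cancel₀ ζ ht0, add_mul, one_mul, ← add_assoc]
    exact Submonoid.mul_mem _ (by simpa [add_assoc] using hroots hη (i * (n + 1) + (n + 1))) ht

end PowSub

theorem fiberRatios_le {Ω : Type*} [Field Ω] {f : Ω → Ω} {a : Ω} {S : Subfield Ω}
    (h : f ⁻¹' {a} ⊆ S) : fiberRatios f a ≤ S.toSubmonoid :=
  Submonoid.closure_le.mpr <| by
    rintro _ ⟨x, hx, y, hy, rfl⟩
    exact S.div_mem (h hx) (h hy)

theorem preimage_iterate_pow_sub_subset_fieldRange {F K L : Type*} [Field F] [Field K] [Field L]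
    [Algebra F K] (ι : K →+* L) {d : ℕ} (hd : d ≠ 0) (c α : F) (N : ℕ)
    (hsplits : ((polyIter (X ^ d - C c) N - C α).map (algebraMap F K)).Splits) :
    (fun y : L => y ^ d - ι (algebraMap F K c))^[N] ⁻¹' {ι (algebraMap F K α)} ⊆
      ι.fieldRange := by
  intro β hβ
  have hp0 : (polyIter (X ^ d - C c) N - C α).map (algebraMap F K) ≠ 0 := by
    refine Polynomial.map_ne_zero (ne_zero_of_natDegree_gt (n := 0) ?_)
    rw [natDegree_sub_C, natDegree_polyIter, natDegree_X_pow_sub_C]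
    positivity
  refine hsplits.mem_range_of_isRoot hp0 ?_
  simpa [Polynomial.map_map, polyIter_map, eval_polyIter, sub_eq_zero] using hβ

theorem stmt6 (d : ℕ) (hd : 2 ≤ d) (F : Type*) [Field F] (hchar : (d : F) ≠ 0)
    (c : F) (n₀ : ℕ) (hn₀ : 1 ≤ n₀)
    (hper : (fun x : F => x ^ d - c)^[n₀] 0 = 0)
    (α : F) (hα : α ≠ -c) :
    ∀ N : ℕ, 1 ≤ N →
      ∃ x : (polyIter (X ^ d - Polynomial.C c) N - Polynomial.C α).SplittingField,
        orderOf x = d ^ (max (N / n₀ - 1) 0 + 1) := by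
  intro N hN
  obtain ⟨n, rfl⟩ := Nat.exists_eq_add_of_le' hn₀
  set m := N / (n + 1) - 1
  obtain ⟨j, hj, hjN⟩ :=
    Nat.exists_ne_zero_add_div_sub_one_mul_eq (N := N) (k := n + 1) (by omega) (by omega)
  set K := (polyIter (X ^ d - Polynomial.C c) N - Polynomial.C α).SplittingField
  set ι := algebraMap K (AlgebraicClosure K)
  set φ := ι.comp (algebraMap F K)
  have hdΩ : (d : AlgebraicClosure K) ≠ 0 := by simpa [φ] using (map_ne_zero φ).mpr hchar
  have : NeZero (d : AlgebraicClosure K) := ⟨hdΩ⟩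
  have hsemi : Function.Semiconj φ (fun x : F => x ^ d - c) (fun y => y ^ d - φ c) :=
    fun x => by simp
  obtain ⟨ζ, hζ⟩ := HasEnoughRootsOfUnity.exists_primitiveRoot (AlgebraicClosure K) (d ^ (m + 1))
  have hζmem := pow_eq_one_mem_fiberRatios hd hdΩ (a := φ α)
    (by rw [← map_neg φ]; exact φ.injective.ne hα)
    (by simpa [hper] using (hsemi.iterate_right (n + 1) 0).symm) hj m hζ.pow_eq_one
  obtain ⟨z, rfl⟩ := RingHom.mem_fieldRange.mp <| fiberRatios_le
    (preimage_iterate_pow_sub_subset_fieldRange ι (by omega) c α N (SplittingField.splits _))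
    (hjN ▸ hζmem)
  refine ⟨z, ?_⟩
  rw [← orderOf_injective ι.toMonoidHom ι.injective z, max_eq_left (Nat.zero_le _)]
  exact hζ.eq_orderOf.symm
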